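/- Let X be a quandle, G_X its enveloping group, G an abelian group with a left G_X-action by automorphisms, and κ : X × X → G any family (κ_{x,y}). A braid word w on k strands transforms a bottom color vector x⃗ ∈ X^k and bead vector a⃗ ∈ G^k, letter by letter from bottom to top, by: σ_j replaces (x_j, x_{j+1}) by (x_{j+1}, x_j * x_{j+1}) and (a_j, a_{j+1}) by (a_{j+1}, x_{j+1}·a_j + a_{j+1} − (x_j*x_{j+1})·a_{j+1} + κ_{x_j,x_{j+1}}), leaving other entries fixed; σ_j^{−1} applies the inverse transformation. Define the Boltzmann weight of a letter σ_j^{ε} whose color vector immediately below it is x⃗ to be B = ε·(x_k·…·x_{j+2})·κ_{u,v}, where (u,v) = (x_j, x_{j+1}) if ε = +1, and (u,v) = (x_{j+1} \bar{*} x_j, x_j) if ε = −1 (c \bar{*} b being the unique a with a*b = c); the empty product acts as the identity. Then, with (y⃗, b⃗) the top vectors produced by w from (x⃗, a⃗), WS_{y⃗}(b⃗) − WS_{x⃗}(a⃗) equals the sum of the Boltzmann weights of all the letters of w, where WS_{x⃗}(a⃗) = Σ_{i=1}^{k} (x_k·…·x_{i+1})·a_i. -/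

import Mathlib

open Quandles

/-- The canonical map from a quandle to its enveloping group. -/
def iota (X : Type*) [Quandle X] (x : X) : Rack.EnvelGroup X := Rack.toEnvelGroup X x

/-- The bead transformation with 2-cochain `κ` of the braid generator `σ_j` (strands are
indexed `0, 1, 2, …`): colors transform by `(x_j, x_{j+1}) ↦ (x_{j+1}, x_j * x_{j+1})`
(the paper's `x_j * x_{j+1}` is Mathlib's `x_{j+1} ◃ x_j`), and beads by
`(a_j,a_{j+1}) ↦ (a_{j+1}, x_{j+1}·a_j + a_{j+1} − (x_j*x_{j+1})·a_{j+1} + κ_{x_j,x_{j+1}})`. -/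
def posStep {X G : Type*} [Quandle X] [AddCommGroup G]
    [DistribMulAction (Rack.EnvelGroup X) G] (κ : X → X → G)
    (j : ℕ) (s : (ℕ → X) × (ℕ → G)) : (ℕ → X) × (ℕ → G) :=
  (Function.update (Function.update s.1 j (s.1 (j + 1))) (j + 1) (s.1 (j + 1) ◃ s.1 j),
   Function.update (Function.update s.2 j (s.2 (j + 1))) (j + 1)
     (iota X (s.1 (j + 1)) • s.2 j + s.2 (j + 1) -
       iota X (s.1 (j + 1) ◃ s.1 j) • s.2 (j + 1) + κ (s.1 j) (s.1 (j + 1))))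

/-- Transformation associated to a braid word, applied letter by letter from bottom to
top; a letter `(j, true)` is `σ_j` and `(j, false)` is `σ_j⁻¹`. -/
def wordAction {σ : Type*} (pos neg : ℕ → σ → σ) : List (ℕ × Bool) → σ → σ
  | [], s => s
  | l :: w, s => wordAction pos neg w ((if l.2 then pos l.1 else neg l.1) s)

/-- The coefficient `x_{k-1}·x_{k-2}·…·x_{i+1}` (descending, in the enveloping group)
of the `i`-th bead in the weighted sum on `k` strands. -/
def coeff {X : Type*} [Quandle X] (k i : ℕ) (x : ℕ → X) : Rack.EnvelGroup X :=
  ((List.range (k - 1 - i)).map fun m => iota X (x (k - 1 - m))).prod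

/-- The weighted sum `WS_{x⃗}(a⃗) = Σ_i (x_{k-1}·…·x_{i+1})·a_i`. -/
def weightedSum {X G : Type*} [Quandle X] [AddCommGroup G]
    [DistribMulAction (Rack.EnvelGroup X) G]
    (k : ℕ) (s : (ℕ → X) × (ℕ → G)) : G :=
  ∑ i ∈ Finset.range k, coeff k i s.1 • s.2 i

/-- The Boltzmann weight of a letter `σ_j^ε` whose color vector immediately below it is
`x⃗`:  `ε·(x_{k-1}·…·x_{j+2})·κ_{u,v}` with `(u,v) = (x_j, x_{j+1})` if `ε = +1` and
`(u,v) = (x_{j+1} \bar{*} x_j, x_j)` if `ε = −1` (the paper's `c \bar{*} b` is Mathlib's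
`b ◃⁻¹ c`). -/
def letterWeight {X G : Type*} [Quandle X] [AddCommGroup G]
    [DistribMulAction (Rack.EnvelGroup X) G] (κ : X → X → G)
    (k : ℕ) (x : ℕ → X) : ℕ × Bool → G
  | (j, true) => coeff k (j + 1) x • κ (x j) (x (j + 1))
  | (j, false) => -(coeff k (j + 1) x • κ (x j ◃⁻¹ x (j + 1)) (x j))

/-- The sum of the Boltzmann weights of all the letters of a braid word, starting from a
given bottom state. -/
def totalWeight {X G : Type*} [Quandle X] [AddCommGroup G]
    [DistribMulAction (Rack.EnvelGroup X) G] (κ : X → X → G)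
    (pos neg : ℕ → (ℕ → X) × (ℕ → G) → (ℕ → X) × (ℕ → G)) (k : ℕ) :
    List (ℕ × Bool) → (ℕ → X) × (ℕ → G) → G
  | [], _ => 0
  | l :: w, s =>
      letterWeight κ k s.1 l +
        totalWeight κ pos neg k w ((if l.2 then pos l.1 else neg l.1) s)

/-! Each letter changes the weighted sum by exactly its Boltzmann weight, so the identity
telescopes along the word. A letter `σ_j` moves only the beads `j, j + 1` and the colours
`j, j + 1`; the coefficients of the beads below `j` survive because in `G_X`
`ι(x_j * x_{j+1}) · ι(x_{j+1}) = ι(x_{j+1}) · ι(x_j)`, and the two moved beads contribute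
`(x_k ⋯ x_{j+2}) · κ_{x_j, x_{j+1}}` on top of their old terms. A letter `σ_j⁻¹` is handled
by applying this to the preimage under `σ_j`. -/

section BeadAction

variable {X G : Type*} [Quandle X] [AddCommGroup G] [DistribMulAction (Rack.EnvelGroup X) G]

lemma iota_act_mul_iota (a b : X) : iota X (b ◃ a) * iota X b = iota X b * iota X a := by
  have h := (Rack.toEnvelGroup X).map_act (x := b) (y := a)
  simp only [Quandle.conj_act_eq_conj] at h
  simp only [iota, h]
  group

lemma coeff_congr {k i : ℕ} {x y : ℕ → X} (h : ∀ l, i < l → l < k → x l = y l) :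
    coeff k i x = coeff k i y := by
  unfold coeff
  congr 1
  refine List.map_congr_left fun m hm => ?_
  rw [List.mem_range] at hm
  rw [h _ (by omega) (by omega)]

lemma coeff_eq_coeff_succ_mul {k i : ℕ} (x : ℕ → X) (h : i + 2 ≤ k) :
    coeff k i x = coeff k (i + 1) x * iota X (x (i + 1)) := by
  unfold coeff
  rw [show k - 1 - i = k - 1 - (i + 1) + 1 by omega, List.range_succ, List.map_append,
    List.prod_append]
  simp [show k - 1 - (k - 1 - (i + 1)) = i + 1 by omega]

lemma coeff_congr_of_coeff_eq {k i m : ℕ} {x y : ℕ → X} (him : i ≤ m) (hmk : m < k)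
    (hm : coeff k m x = coeff k m y) (h : ∀ l, i < l → l ≤ m → x l = y l) :
    coeff k i x = coeff k i y := by
  induction him using Nat.decreasingInduction with
  | self => exact hm
  | of_succ i hi ih =>
    rw [coeff_eq_coeff_succ_mul x (by omega), coeff_eq_coeff_succ_mul y (by omega),
      ih fun l hl hlm => h l (by omega) hlm, h (i + 1) (by omega) hi]

section PosStep

variable {κ : X → X → G} {j : ℕ} {s : (ℕ → X) × (ℕ → G)}

@[simp] lemma posStep_fst_self : (posStep κ j s).1 j = s.1 (j + 1) := by
  simp [posStep]

@[simp] lemma posStep_fst_succ : (posStep κ j s).1 (j + 1) = s.1 (j + 1) ◃ s.1 j := by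
  simp [posStep]

lemma posStep_fst_of_ne {i : ℕ} (h₀ : i ≠ j) (h₁ : i ≠ j + 1) :
    (posStep κ j s).1 i = s.1 i := by
  simp [posStep, h₀, h₁]

@[simp] lemma posStep_snd_self : (posStep κ j s).2 j = s.2 (j + 1) := by
  simp [posStep]

@[simp] lemma posStep_snd_succ : (posStep κ j s).2 (j + 1) =
    iota X (s.1 (j + 1)) • s.2 j + s.2 (j + 1) -
      iota X (s.1 (j + 1) ◃ s.1 j) • s.2 (j + 1) + κ (s.1 j) (s.1 (j + 1)) := by
  simp [posStep]

lemma posStep_snd_of_ne {i : ℕ} (h₀ : i ≠ j) (h₁ : i ≠ j + 1) :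
    (posStep κ j s).2 i = s.2 i := by
  simp [posStep, h₀, h₁]

lemma coeff_posStep_of_gt {k i : ℕ} (hji : j < i) :
    coeff k i (posStep κ j s).1 = coeff k i s.1 :=
  coeff_congr fun _ hl _ => posStep_fst_of_ne (by omega) (by omega)

lemma coeff_posStep_of_lt {k i : ℕ} (hij : i < j) (hk : j + 2 ≤ k) :
    coeff k i (posStep κ j s).1 = coeff k i s.1 := by
  obtain ⟨m, rfl⟩ : ∃ m, j = m + 1 := ⟨j - 1, by omega⟩
  refine coeff_congr_of_coeff_eq (m := m) (by omega) (by omega) ?_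
    fun l _ _ => posStep_fst_of_ne (by omega) (by omega)
  rw [coeff_eq_coeff_succ_mul _ (by omega), coeff_eq_coeff_succ_mul _ (by omega),
    coeff_eq_coeff_succ_mul s.1 (by omega), coeff_eq_coeff_succ_mul s.1 (by omega),
    coeff_posStep_of_gt (by omega), posStep_fst_self, posStep_fst_succ, mul_assoc, mul_assoc,
    iota_act_mul_iota]

lemma weightedSum_posStep {k : ℕ} (hk : j + 2 ≤ k) :
    weightedSum k (posStep κ j s) =
      weightedSum k s + coeff k (j + 1) s.1 • κ (s.1 j) (s.1 (j + 1)) := by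
  have hpair : ({j, j + 1} : Finset ℕ) ⊆ Finset.range k := by
    intro i hi
    simp only [Finset.mem_insert, Finset.mem_singleton] at hi
    simp only [Finset.mem_range]
    omega
  have houtside : ∀ i ∈ Finset.range k \ {j, j + 1},
      coeff k i (posStep κ j s).1 • (posStep κ j s).2 i = coeff k i s.1 • s.2 i := by
    intro i hi
    simp only [Finset.mem_sdiff, Finset.mem_insert, Finset.mem_singleton, not_or] at hi
    obtain ⟨-, hij, hij'⟩ := hi
    rw [posStep_snd_of_ne hij hij']
    rcases Nat.lt_or_gt_of_ne hij with h | h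
    · rw [coeff_posStep_of_lt h hk]
    · rw [coeff_posStep_of_gt (by omega)]
  have hcoeff :
      coeff k j (posStep κ j s).1 = coeff k (j + 1) s.1 * iota X (s.1 (j + 1) ◃ s.1 j) := by
    rw [coeff_eq_coeff_succ_mul _ (by omega), coeff_posStep_of_gt (by omega), posStep_fst_succ]
  unfold weightedSum
  rw [← Finset.sum_sdiff hpair,
    ← Finset.sum_sdiff hpair (f := fun i => coeff k i s.1 • s.2 i),
    Finset.sum_congr rfl houtside, Finset.sum_pair (by omega), Finset.sum_pair (by omega),
    hcoeff, coeff_posStep_of_gt (by omega), coeff_eq_coeff_succ_mul (i := j) s.1 (by omega),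
    posStep_snd_self, posStep_snd_succ]
  simp only [mul_smul, smul_add, smul_sub]
  abel

end PosStep

lemma weightedSum_of_rightInverse {κ : X → X → G} {j k : ℕ}
    {neg : (ℕ → X) × (ℕ → G) → (ℕ → X) × (ℕ → G)}
    (hneg : Function.RightInverse neg (posStep κ j)) (hk : j + 2 ≤ k) (s : (ℕ → X) × (ℕ → G)) :
    weightedSum k (neg s) =
      weightedSum k s - coeff k (j + 1) s.1 • κ (s.1 j ◃⁻¹ s.1 (j + 1)) (s.1 j) := by
  set t := neg s
  have hts : posStep κ j t = s := hneg s
  have hcoeff : coeff k (j + 1) s.1 = coeff k (j + 1) t.1 := by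
    rw [← hts, coeff_posStep_of_gt (Nat.lt_succ_self j)]
  have hsucc : s.1 j = t.1 (j + 1) := by rw [← hts, posStep_fst_self]
  have hself : t.1 j = s.1 j ◃⁻¹ s.1 (j + 1) := by
    rw [← hts, posStep_fst_succ, posStep_fst_self, Rack.invAct_act_eq]
  have hpos := weightedSum_posStep (κ := κ) hk (s := t)
  rw [hts] at hpos
  rw [← hself, hsucc, hcoeff, hpos]
  abel

lemma weightedSum_letter {κ : X → X → G} {k : ℕ}
    {neg : ℕ → (ℕ → X) × (ℕ → G) → (ℕ → X) × (ℕ → G)}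
    (hneg : ∀ j, Function.RightInverse (neg j) (posStep κ j)) {l : ℕ × Bool}
    (hl : l.1 + 2 ≤ k) (s : (ℕ → X) × (ℕ → G)) :
    weightedSum k ((if l.2 then posStep κ l.1 else neg l.1) s) =
      weightedSum k s + letterWeight κ k s.1 l := by
  obtain ⟨j, _ | _⟩ := l
  · rw [if_neg Bool.false_ne_true, weightedSum_of_rightInverse (hneg j) hl, letterWeight,
      sub_eq_add_neg]
  · rw [if_pos rfl, weightedSum_posStep hl, letterWeight]

end BeadAction

/-- For the bead transformation with 2-cochain `κ` (`σ_j⁻¹` acting as the inverse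
transformation of `σ_j`), the change of weighted sum along a braid word equals the sum of
the Boltzmann weights of its letters:  `WS_{y⃗}(b⃗) − WS_{x⃗}(a⃗) = Σ B`. -/
theorem weightedSum_change_eq_totalWeight
    {X G : Type*} [Quandle X] [AddCommGroup G]
    [DistribMulAction (Rack.EnvelGroup X) G] (κ : X → X → G)
    (k : ℕ) (neg : ℕ → (ℕ → X) × (ℕ → G) → (ℕ → X) × (ℕ → G))
    (hneg : ∀ j : ℕ, Function.LeftInverse (neg j) (posStep κ j) ∧
      Function.RightInverse (neg j) (posStep κ j))
    (w : List (ℕ × Bool)) (hw : ∀ l ∈ w, l.1 + 2 ≤ k)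
    (s : (ℕ → X) × (ℕ → G)) :
    weightedSum k (wordAction (posStep κ) neg w s) - weightedSum k s =
      totalWeight κ (posStep κ) neg k w s := by
  induction w generalizing s with
  | nil => rw [wordAction, totalWeight, sub_self]
  | cons l w ih =>
    rw [wordAction, totalWeight, ← ih (fun l' hl' => hw l' (List.mem_cons_of_mem l hl')),
      weightedSum_letter (fun j => (hneg j).2) (hw l List.mem_cons_self)]
    abel
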